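/- Let ω > 0, τ ∈ (0,1), ζ ∈ (0,1), and suppose each map x ↦ B_i(x) is continuous with symmetric positive definite values. Let {x^k} ⊂ ℝ^n be a sequence with d^k := d_ω(x^k) ≠ 0 for all k, such that x^{k+1} = x^k + λ_k d^k where λ_k is the largest number of the form ζ^j (j a nonnegative integer) satisfying the Armijo condition F_i(x^k + λ_k d^k) ≤ F_i(x^k) + λ_k τ θ_{x^k}(d^k) for all i = 1,…,m. If {F_i(x^k)}_k is bounded from below for every i, then every accumulation point of {x^k} is a Pareto stationary point. -/

import Mathlib

open Filter Topology
open scoped RealInnerProductSpace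

noncomputable section

/-- `Euc n` is Euclidean `n`-space `ℝ^n`. -/
abbrev Euc (n : ℕ) := EuclideanSpace ℝ (Fin n)

/-- `HasDirDeriv f x d D` : the one-sided directional derivative of `f` at `x`
in direction `d` exists and equals `D`, i.e. `(f (x + α • d) - f x)/α → D` as `α → 0⁺`. -/
def HasDirDeriv {n : ℕ} (f : Euc n → ℝ) (x d : Euc n) (D : ℝ) : Prop :=
  Filter.Tendsto (fun α : ℝ => (f (x + α • d) - f x) / α)
    (nhdsWithin 0 (Set.Ioi 0)) (nhds D)

/-- `x` is Pareto stationary for the objectives `F i`: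
for every direction `d`, `max_i F_i'(x; d) ≥ 0`, i.e. some objective has
nonnegative directional derivative in direction `d`. -/
def ParetoStationary {n m : ℕ} (F : Fin m → Euc n → ℝ) (x : Euc n) : Prop :=
  ∀ d : Euc n, ∃ i : Fin m, ∃ D : ℝ, HasDirDeriv (F i) x d D ∧ 0 ≤ D

/-- `θ_x(d) = max_i { ⟪∇g_i(x), d⟫ + ½⟪d, B_i(x) d⟫ + h_i(x+d) - h_i(x) }`. -/
def theta {n m : ℕ} (g h : Fin m → Euc n → ℝ)
    (B : Fin m → Euc n → (Euc n →L[ℝ] Euc n)) (x d : Euc n) : ℝ :=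
  ⨆ i : Fin m, (⟪gradient (g i) x, d⟫ + (1 / 2) * ⟪d, B i x d⟫ + h i (x + d) - h i x)

/-- `φ_{ω,x}(d) = θ_x(d) + (ω/2)‖d‖²`. -/
def phi {n m : ℕ} (g h : Fin m → Euc n → ℝ)
    (B : Fin m → Euc n → (Euc n →L[ℝ] Euc n)) (ω : ℝ) (x d : Euc n) : ℝ :=
  theta g h B x d + (ω / 2) * ‖d‖ ^ 2

/-!
Along the iterates `θ_{x_k}(d_k) ≤ -(ω/2)‖d_k‖² ≤ 0`, so each `F_i(x_k)` decreases by at least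
`τ λ_k |θ_{x_k}(d_k)|`, and boundedness from below forces `λ_k θ_{x_k}(d_k) → 0`.
If `φ_{ω,a}(d₀) < 0` at a cluster point `a`, continuity of `φ_{ω,·}(d₀)` gives
`θ_{x_k}(d_k) ≤ φ_{ω,x_k}(d₀) < -ε` along a subsequence converging to `a`. A uniform second-order
bound for the `g_i` near `a` and convexity of the `h_i` show that the Armijo condition holds for
every step `t ≤ c / (1 + ‖d_k‖)`, so backtracking gives `λ_k ≥ ζ c / (1 + ‖d_k‖)`, which keeps
`λ_k |θ_{x_k}(d_k)|` away from zero: a contradiction. Hence `φ_{ω,a} ≥ 0`, and comparing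
`θ_a(t d) / t` with the directional derivatives of the `F_i` as `t → 0⁺` shows that `a` is Pareto
stationary.
-/

open Set

theorem tendsto_zero_of_add_le_of_bddBelow {u v : ℕ → ℝ} (hv : ∀ k, 0 ≤ v k)
    (hu : ∀ k, u (k + 1) + v k ≤ u k) (hb : BddBelow (range u)) :
    Tendsto v atTop (𝓝 0) := by
  have hanti : Antitone u := antitone_nat_of_succ_le fun k => by linarith [hu k, hv k]
  have hlim := tendsto_atTop_ciInf hanti hb
  have hdiff : Tendsto (fun k => u k - u (k + 1)) atTop (𝓝 0) := by
    simpa using hlim.sub (hlim.comp (tendsto_add_atTop_nat 1))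
  exact tendsto_of_tendsto_of_tendsto_of_le_of_le tendsto_const_nhds hdiff hv
    fun k => by linarith [hu k]

theorem mul_le_of_backtracking {ζ s lam : ℝ} {P : ℝ → Prop} (hζ : ζ ∈ Ioo 0 1) (hs : s ≤ 1)
    (hP : ∀ t, 0 < t → t ≤ s → P t) (hform : ∃ j : ℕ, lam = ζ ^ j)
    (hmax : ∀ j : ℕ, lam < ζ ^ j → ¬ P (ζ ^ j)) : ζ * s ≤ lam := by
  obtain ⟨hζ0, hζ1⟩ := hζ
  obtain ⟨j, rfl⟩ := hform
  cases j with
  | zero => nlinarith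
  | succ j =>
    have hlt : ζ ^ (j + 1) < ζ ^ j := pow_lt_pow_right_of_lt_one₀ hζ0 hζ1 (Nat.lt_succ_self j)
    have hsj : s < ζ ^ j := by
      by_contra! hle
      exact hmax j hlt (hP _ (pow_pos hζ0 j) hle)
    rw [pow_succ']
    exact (mul_lt_mul_of_pos_left hsj hζ0).le

theorem ContDiff.exists_norm_sub_sub_fderiv_le {E F : Type*} [NormedAddCommGroup E]
    [NormedSpace ℝ E] [NormedAddCommGroup F] [NormedSpace ℝ F] {f : E → F}
    (hf : ContDiff ℝ 2 f) {K : Set E} (hK : IsCompact K) (hKc : Convex ℝ K) :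
    ∃ L, ∀ u ∈ K, ∀ v ∈ K, ‖f v - f u - fderiv ℝ f u (v - u)‖ ≤ L * ‖v - u‖ ^ 2 := by
  obtain ⟨C, hC⟩ := ((hf.fderiv_right (m := 1) le_rfl).contDiffOn (s := K)).exists_lipschitzOnWith
    one_ne_zero hKc hK
  refine ⟨C, fun u hu v hv => ?_⟩
  have hdiff : Differentiable ℝ f := hf.differentiable (by norm_num)
  have hseg : ∀ z ∈ segment ℝ u v, ‖fderiv ℝ (fun y => f y - fderiv ℝ f u y) z‖ ≤ C * ‖v - u‖ := by
    intro z hz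
    rw [fderiv_fun_sub (hdiff z) (fderiv ℝ f u).differentiableAt, ContinuousLinearMap.fderiv]
    calc ‖fderiv ℝ f z - fderiv ℝ f u‖ ≤ C * ‖z - u‖ := by
          simpa [dist_eq_norm] using hC.dist_le_mul z (hKc.segment_subset hu hv hz) u hu
      _ ≤ C * ‖v - u‖ := by
          have := dist_add_dist_of_mem_segment hz
          rw [← dist_eq_norm, ← dist_eq_norm, dist_comm z, dist_comm v]
          gcongr
          linarith [dist_nonneg (x := z) (y := v)]
  have := (convex_segment u v).norm_image_sub_le_of_norm_fderiv_le
    (fun z _ => (hdiff z).sub (fderiv ℝ f u).differentiableAt) hseg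
    (left_mem_segment ℝ u v) (right_mem_segment ℝ u v)
  calc ‖f v - f u - fderiv ℝ f u (v - u)‖ = ‖(f v - fderiv ℝ f u v) - (f u - fderiv ℝ f u u)‖ := by
        rw [map_sub]; congr 1; abel
    _ ≤ C * ‖v - u‖ * ‖v - u‖ := this
    _ = C * ‖v - u‖ ^ 2 := by ring

theorem ConvexOn.sub_le_mul_sub {E : Type*} [AddCommGroup E] [Module ℝ E] {f : E → ℝ}
    (hf : ConvexOn ℝ univ f) (x d : E) {t : ℝ} (ht0 : 0 ≤ t) (ht1 : t ≤ 1) :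
    f (x + t • d) - f x ≤ t * (f (x + d) - f x) := by
  have := hf.2 (mem_univ x) (mem_univ (x + d)) (sub_nonneg.2 ht1) ht0 (by ring)
  rw [show (1 - t) • x + t • (x + d) = x + t • d by module, smul_eq_mul, smul_eq_mul] at this
  linarith

theorem ConvexOn.exists_hasDerivWithinAt_Ioi {E : Type*} [AddCommGroup E] [Module ℝ E]
    {f : E → ℝ} (hf : ConvexOn ℝ univ f) (x d : E) :
    ∃ q, HasDerivWithinAt (fun t : ℝ => f (x + t • d)) q (Ioi 0) 0 := by
  have hline : ConvexOn ℝ univ (fun t : ℝ => f (x + t • d)) := by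
    have := hf.comp_affineMap (AffineMap.lineMap x (x + d))
    simpa [Function.comp_def, AffineMap.lineMap_apply_module', add_comm] using this
  exact ⟨_, hline.hasDerivWithinAt_rightDeriv_of_mem_interior (by simp)⟩

theorem exists_nonneg_of_hasDerivWithinAt_Ioi {ι : Type*} [Finite ι] {T : ι → ℝ → ℝ}
    {D : ι → ℝ} (hT : ∀ i, HasDerivWithinAt (T i) (D i) (Ioi 0) 0) (hT0 : ∀ i, T i 0 = 0)
    {c : ℝ} (hc : ∀ t > 0, ∃ i, -(c * t ^ 2) ≤ T i t) : ∃ i, 0 ≤ D i := by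
  by_contra! hneg
  have hev : ∀ᶠ t in 𝓝[>] 0, ∀ i, T i t / t < D i / 2 ∧ D i / 2 < -(c * t) := by
    refine eventually_all.2 fun i => ?_
    have hslope := (hasDerivWithinAt_iff_tendsto_slope' (lt_irrefl 0)).1 (hT i)
    have hlin : Tendsto (fun t : ℝ => -(c * t)) (𝓝[>] 0) (𝓝 0) :=
      tendsto_nhdsWithin_of_tendsto_nhds
        ((continuous_const.mul continuous_id).neg.tendsto' 0 0 (by simp))
    refine ((hslope.eventually (gt_mem_nhds (show D i < D i / 2 by linarith [hneg i]))).and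
      (hlin.eventually (lt_mem_nhds (by linarith [hneg i])))).mono fun t ht => ⟨?_, ht.2⟩
    simpa [slope_def_field, hT0] using ht.1
  obtain ⟨t, ht, ht0⟩ := (hev.and self_mem_nhdsWithin).exists
  obtain ⟨i, hi⟩ := hc t ht0
  have h1 : -(c * t) ≤ T i t / t := by
    rw [le_div_iff₀ ht0]; nlinarith
  linarith [(ht i).1, (ht i).2]

theorem hasDirDeriv_iff_hasDerivWithinAt {n : ℕ} {f : Euc n → ℝ} {x d : Euc n} {D : ℝ} :
    HasDirDeriv f x d D ↔ HasDerivWithinAt (fun t : ℝ => f (x + t • d)) D (Ioi 0) 0 := by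
  rw [HasDirDeriv, hasDerivWithinAt_iff_tendsto_slope' (s := Ioi 0) (lt_irrefl 0)]
  refine tendsto_congr fun t => ?_
  simp [slope_def_field]

theorem exists_pos_taylor_bound_closedBall {E ι : Type*} [NormedAddCommGroup E]
    [InnerProductSpace ℝ E] [ProperSpace E] [Finite ι] {f : ι → E → ℝ}
    (hf : ∀ i, ContDiff ℝ 2 (f i)) (a : E) :
    ∃ L > 0, ∀ i, ∀ x ∈ Metric.closedBall a 1, ∀ s : E, ‖s‖ ≤ 1 →
      f i (x + s) - f i x - ⟪gradient (f i) x, s⟫ ≤ L * ‖s‖ ^ 2 := by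
  have hL : ∀ i, ∀ᶠ L in atTop, ∀ x ∈ Metric.closedBall a 1, ∀ s : E, ‖s‖ ≤ 1 →
      f i (x + s) - f i x - ⟪gradient (f i) x, s⟫ ≤ L * ‖s‖ ^ 2 := by
    intro i
    obtain ⟨L, hL⟩ := (hf i).exists_norm_sub_sub_fderiv_le (isCompact_closedBall a 2)
      (convex_closedBall a 2)
    refine eventually_atTop.2 ⟨L, fun L' hL' x hx s hs => ?_⟩
    have hx2 : x ∈ Metric.closedBall a 2 :=
      Metric.closedBall_subset_closedBall one_le_two hx
    have hxs : x + s ∈ Metric.closedBall a 2 := by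
      rw [Metric.mem_closedBall, dist_eq_norm, add_sub_right_comm]
      calc ‖x - a + s‖ ≤ ‖x - a‖ + ‖s‖ := norm_add_le _ _
        _ ≤ 2 := by rw [← dist_eq_norm]; linarith [Metric.mem_closedBall.1 hx]
    calc f i (x + s) - f i x - ⟪gradient (f i) x, s⟫
        ≤ ‖f i (x + s) - f i x - fderiv ℝ (f i) x (x + s - x)‖ := by
          rw [add_sub_cancel_left, inner_gradient_left]; exact Real.le_norm_self _
      _ ≤ L * ‖x + s - x‖ ^ 2 := hL x hx2 _ hxs
      _ ≤ L' * ‖s‖ ^ 2 := by rw [add_sub_cancel_left]; gcongr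
  obtain ⟨L, hL, hpos⟩ := ((eventually_all.2 hL).and (eventually_gt_atTop 0)).exists
  exact ⟨L, hpos, hL⟩

section ProximalNewton

variable {n m : ℕ} (g h : Fin m → Euc n → ℝ) (B : Fin m → Euc n → (Euc n →L[ℝ] Euc n))

def thetaComponent (i : Fin m) (x d : Euc n) : ℝ :=
  ⟪gradient (g i) x, d⟫ + (1 / 2) * ⟪d, B i x d⟫ + h i (x + d) - h i x

theorem thetaComponent_le_theta (i : Fin m) (x d : Euc n) :
    thetaComponent g h B i x d ≤ theta g h B x d :=
  le_ciSup (f := fun i => thetaComponent g h B i x d) (Finite.bddAbove_range _) i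

theorem exists_thetaComponent_eq_theta [Nonempty (Fin m)] (x d : Euc n) :
    ∃ i, thetaComponent g h B i x d = theta g h B x d :=
  exists_eq_ciSup_of_finite

theorem theta_zero (x : Euc n) : theta g h B x 0 = 0 := by
  simp [theta, Real.iSup_const_zero]

theorem theta_le_of_phi_le_phi_zero {ω : ℝ} {x d : Euc n}
    (hd : phi g h B ω x d ≤ phi g h B ω x 0) : theta g h B x d ≤ -(ω / 2 * ‖d‖ ^ 2) := by
  simp only [phi, theta_zero, norm_zero] at hd
  linarith

theorem continuous_phi [Nonempty (Fin m)] (hg : ∀ i, ContDiff ℝ 1 (g i))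
    (hh : ∀ i, ConvexOn ℝ univ (h i)) (hB : ∀ i, Continuous (B i)) (ω : ℝ) (d : Euc n) :
    Continuous fun x => phi g h B ω x d := by
  have hθ : Continuous fun x => theta g h B x d := by
    simp only [theta, ← Finset.sup'_univ_eq_ciSup]
    refine Continuous.finset_sup'_apply _ fun i _ => ?_
    have hgrad : Continuous (gradient (g i)) :=
      (InnerProductSpace.toDual ℝ (Euc n)).symm.continuous.comp
        ((hg i).continuous_fderiv one_ne_zero)
    have hhi := (hh i).locallyLipschitz.continuous
    have hBi := (hB i).clm_apply (continuous_const (y := d))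
    fun_prop
  exact hθ.add continuous_const

variable {g h B}

theorem le_add_mul_theta_add_of_taylor_bound {x d : Euc n} {L t : ℝ}
    (hh : ∀ i, ConvexOn ℝ univ (h i)) (hB : ∀ i v, 0 ≤ ⟪v, B i x v⟫)
    (hL : ∀ i, ∀ s : Euc n, ‖s‖ ≤ 1 → g i (x + s) - g i x - ⟪gradient (g i) x, s⟫ ≤ L * ‖s‖ ^ 2)
    (ht0 : 0 ≤ t) (ht1 : t ≤ 1) (htd : t * ‖d‖ ≤ 1) (i : Fin m) :
    g i (x + t • d) + h i (x + t • d)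
      ≤ g i x + h i x + t * theta g h B x d + L * t ^ 2 * ‖d‖ ^ 2 := by
  have htd' : ‖t • d‖ = t * ‖d‖ := by rw [norm_smul, Real.norm_of_nonneg ht0]
  have hg := hL i (t • d) (htd' ▸ htd)
  have hconv := (hh i).sub_le_mul_sub x d ht0 ht1
  have hθ := thetaComponent_le_theta g h B i x d
  have hBi := hB i d
  rw [real_inner_smul_right, htd'] at hg
  unfold thetaComponent at hθ
  nlinarith

theorem armijo_of_small_step {x d : Euc n} {L t τ ω : ℝ}
    (hh : ∀ i, ConvexOn ℝ univ (h i)) (hB : ∀ i v, 0 ≤ ⟪v, B i x v⟫)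
    (hL : ∀ i, ∀ s : Euc n, ‖s‖ ≤ 1 → g i (x + s) - g i x - ⟪gradient (g i) x, s⟫ ≤ L * ‖s‖ ^ 2)
    (hdesc : theta g h B x d ≤ -(ω / 2 * ‖d‖ ^ 2)) (hτ : τ ≤ 1)
    (ht0 : 0 ≤ t) (ht1 : t ≤ 1) (htd : t * ‖d‖ ≤ 1) (htL : 2 * L * t ≤ (1 - τ) * ω) (i : Fin m) :
    g i (x + t • d) + h i (x + t • d) ≤ g i x + h i x + t * τ * theta g h B x d := by
  have := le_add_mul_theta_add_of_taylor_bound hh hB hL ht0 ht1 htd i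
  have hrem : L * t ^ 2 * ‖d‖ ^ 2 ≤ t * (1 - τ) * -theta g h B x d := by
    calc L * t ^ 2 * ‖d‖ ^ 2 = t * (L * t * ‖d‖ ^ 2) := by ring
      _ ≤ t * ((1 - τ) * ω / 2 * ‖d‖ ^ 2) := by gcongr; linarith
      _ ≤ t * ((1 - τ) * -theta g h B x d) :=
          mul_le_mul_of_nonneg_left (by nlinarith) ht0
      _ = t * (1 - τ) * -theta g h B x d := by ring
  linarith

theorem le_lam_mul_neg_theta {x d : Euc n} {L τ ζ ω ε lam : ℝ}
    (hh : ∀ i, ConvexOn ℝ univ (h i)) (hB : ∀ i v, 0 ≤ ⟪v, B i x v⟫)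
    (hL : ∀ i, ∀ s : Euc n, ‖s‖ ≤ 1 → g i (x + s) - g i x - ⟪gradient (g i) x, s⟫ ≤ L * ‖s‖ ^ 2)
    (hL0 : 0 < L) (hω : 0 ≤ ω) (hε : 0 ≤ ε) (hτ : τ ≤ 1) (hζ : ζ ∈ Ioo 0 1)
    (hdesc : theta g h B x d ≤ -(ω / 2 * ‖d‖ ^ 2)) (hθε : theta g h B x d ≤ -ε)
    (hform : ∃ j : ℕ, lam = ζ ^ j)
    (hmax : ∀ j : ℕ, lam < ζ ^ j → ∃ i, g i x + h i x + ζ ^ j * τ * theta g h B x d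
      < g i (x + ζ ^ j • d) + h i (x + ζ ^ j • d)) :
    ζ * min 1 ((1 - τ) * ω / (2 * L)) * min (ε / 2) (ω / 4) ≤ lam * -theta g h B x d := by
  set c := min 1 ((1 - τ) * ω / (2 * L))
  set κ := min (ε / 2) (ω / 4)
  set r := ‖d‖
  have hr : 0 ≤ r := norm_nonneg d
  have hτ' : 0 ≤ 1 - τ := by linarith
  have hc0 : 0 ≤ c := le_min zero_le_one (by positivity)
  have hcL : 2 * L * c ≤ (1 - τ) * ω := by
    have := min_le_right 1 ((1 - τ) * ω / (2 * L))
    rwa [le_div_iff₀' (by positivity)] at this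
  have hlam : ζ * (c / (1 + r)) ≤ lam := by
    refine mul_le_of_backtracking (P := fun t => ∀ i, g i (x + t • d) + h i (x + t • d)
      ≤ g i x + h i x + t * τ * theta g h B x d) hζ ?_ (fun t ht0 hts i => ?_) hform
      fun j hj hP => ?_
    · exact (div_le_self hc0 (by linarith)).trans (min_le_left _ _)
    · have htc : t * (1 + r) ≤ c := (le_div_iff₀ (by positivity)).1 hts
      have htc' : t ≤ c := by nlinarith
      have hc1 : c ≤ 1 := min_le_left _ _
      exact armijo_of_small_step hh hB hL hdesc hτ ht0.le (by linarith) (by nlinarith)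
        (by nlinarith) i
    · obtain ⟨i, hi⟩ := hmax j hj
      exact (hP i).not_gt hi
  -- `-θ ≥ max(ε, (ω/2)‖d‖²)` compensates the factor `1 / (1 + ‖d‖)` in the bound on `λ`
  have hκ0 : 0 ≤ κ := le_min (by positivity) (by positivity)
  have hκ : κ * (1 + r) ≤ -theta g h B x d := by
    rcases le_total r 1 with hr1 | hr1
    · nlinarith [min_le_left (ε / 2) (ω / 4)]
    · calc κ * (1 + r) ≤ ω / 4 * (2 * r) := by
            gcongr
            · exact min_le_right _ _
            · linarith
        _ ≤ ω / 2 * r ^ 2 := by nlinarith [mul_le_mul_of_nonneg_left hr1 (mul_nonneg hω hr)]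
        _ ≤ -theta g h B x d := by linarith
  have hstep0 : 0 ≤ ζ * (c / (1 + r)) := mul_nonneg hζ.1.le (by positivity)
  calc ζ * c * κ = ζ * (c / (1 + r)) * (κ * (1 + r)) := by field_simp
    _ ≤ lam * -theta g h B x d := mul_le_mul hlam hκ (by positivity) (hstep0.trans hlam)

theorem tendsto_lam_mul_theta (i : Fin m) {τ : ℝ} (hτ : 0 < τ) {x d : ℕ → Euc n}
    {lam : ℕ → ℝ} (hlam : ∀ k, 0 ≤ lam k) (hθ : ∀ k, theta g h B (x k) (d k) ≤ 0)
    (hstep : ∀ k, x (k + 1) = x k + lam k • d k)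
    (harm : ∀ k, g i (x k + lam k • d k) + h i (x k + lam k • d k)
      ≤ g i (x k) + h i (x k) + lam k * τ * theta g h B (x k) (d k))
    (hbdd : ∃ C, ∀ k, C ≤ g i (x k) + h i (x k)) :
    Tendsto (fun k => lam k * theta g h B (x k) (d k)) atTop (𝓝 0) := by
  obtain ⟨C, hC⟩ := hbdd
  have hdecr := tendsto_zero_of_add_le_of_bddBelow
    (u := fun k => g i (x k) + h i (x k)) (v := fun k => τ * -(lam k * theta g h B (x k) (d k)))
    (fun k => mul_nonneg hτ.le (neg_nonneg.2 (mul_nonpos_of_nonneg_of_nonpos (hlam k) (hθ k))))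
    (fun k => by simp only [hstep k]; linarith [harm k]) ⟨C, by rintro _ ⟨k, rfl⟩; exact hC k⟩
  simpa [mul_comm, hτ.ne'] using hdecr.const_mul (-τ⁻¹)

theorem paretoStationary_of_phi_nonneg [Nonempty (Fin m)] (hg : ∀ i, Differentiable ℝ (g i))
    (hh : ∀ i, ConvexOn ℝ univ (h i)) {ω : ℝ} {a : Euc n} (hphi : ∀ d, 0 ≤ phi g h B ω a d) :
    ParetoStationary (fun i y => g i y + h i y) a := by
  intro d
  choose q hq using fun i => (hh i).exists_hasDerivWithinAt_Ioi a d
  have hgd : ∀ i, HasDerivAt (fun t : ℝ => g i (a + t • d)) ⟪gradient (g i) a, d⟫ 0 := by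
    intro i
    have hline : HasDerivAt (fun t : ℝ => a + t • d) d 0 := by
      simpa using ((hasDerivAt_id (0 : ℝ)).smul_const d).const_add a
    rw [inner_gradient_left]
    exact (hg i a).hasFDerivAt.comp_hasDerivAt_of_eq 0 hline (by simp)
  have hT : ∀ i, HasDerivWithinAt (fun t : ℝ => thetaComponent g h B i a (t • d))
      (⟪gradient (g i) a, d⟫ + q i) (Ioi 0) 0 := by
    intro i
    have hpoly : HasDerivAt (fun t : ℝ => t * ⟪gradient (g i) a, d⟫ + t ^ 2 * (⟪d, B i a d⟫ / 2))
        ⟪gradient (g i) a, d⟫ 0 := by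
      simpa using (hasDerivAt_mul_const _).fun_add ((hasDerivAt_pow 2 (0 : ℝ)).mul_const _)
    refine ((hpoly.hasDerivWithinAt.fun_add (hq i)).sub_const (h i a)).congr (fun t _ => ?_) ?_ <;>
    · simp only [thetaComponent, inner_smul_right, map_smul, inner_smul_left, RCLike.conj_to_real]
      ring
  obtain ⟨i, hi⟩ := exists_nonneg_of_hasDerivWithinAt_Ioi hT
    (fun i => by simp [thetaComponent]) (c := ω / 2 * ‖d‖ ^ 2) fun t _ => by
      obtain ⟨i, hi⟩ := exists_thetaComponent_eq_theta g h B a (t • d)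
      refine ⟨i, ?_⟩
      have := hphi (t • d)
      rw [phi, ← hi, norm_smul, mul_pow, Real.norm_eq_abs, sq_abs] at this
      linarith
  exact ⟨i, _, hasDirDeriv_iff_hasDerivWithinAt.2 ((hgd i).hasDerivWithinAt.add (hq i)), hi⟩

theorem phi_nonneg_of_mapClusterPt [Nonempty (Fin m)] (hg : ∀ i, ContDiff ℝ 2 (g i))
    (hh : ∀ i, ConvexOn ℝ univ (h i)) (hB : ∀ i x v, 0 ≤ ⟪v, B i x v⟫)
    (hBcont : ∀ i, Continuous (B i)) {ω τ ζ : ℝ} (hω : 0 < ω) (hτ : τ < 1)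
    (hζ : ζ ∈ Ioo 0 1) {dω : Euc n → Euc n} (hmin : ∀ y d, phi g h B ω y (dω y) ≤ phi g h B ω y d)
    {x : ℕ → Euc n} {lam : ℕ → ℝ} (hlam_form : ∀ k, ∃ j : ℕ, lam k = ζ ^ j)
    (hlam_max : ∀ k (j : ℕ), lam k < ζ ^ j →
      ∃ i, g i (x k) + h i (x k) + ζ ^ j * τ * theta g h B (x k) (dω (x k))
        < g i (x k + ζ ^ j • dω (x k)) + h i (x k + ζ ^ j • dω (x k)))
    (hlim : Tendsto (fun k => lam k * theta g h B (x k) (dω (x k))) atTop (𝓝 0))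
    {a : Euc n} (ha : MapClusterPt a atTop x) (d₀ : Euc n) : 0 ≤ phi g h B ω a d₀ := by
  by_contra! hneg
  obtain ⟨ε, hε, hεa⟩ : ∃ ε > 0, phi g h B ω a d₀ < -ε :=
    ⟨-phi g h B ω a d₀ / 2, by linarith, by linarith⟩
  obtain ⟨ψ, hψ, hψa⟩ := ha.tendsto_subseq
  obtain ⟨L, hL0, hL⟩ := exists_pos_taylor_bound_closedBall hg a
  set δ := ζ * min 1 ((1 - τ) * ω / (2 * L)) * min (ε / 2) (ω / 4)
  have hδ : 0 < δ := by
    have hτ' : 0 < 1 - τ := by linarith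
    have hc : 0 < min 1 ((1 - τ) * ω / (2 * L)) := lt_min one_pos (by positivity)
    have hκ : 0 < min (ε / 2) (ω / 4) := lt_min (by positivity) (by positivity)
    exact mul_pos (mul_pos hζ.1 hc) hκ
  have hnear : ∀ᶠ j in atTop, x (ψ j) ∈ Metric.closedBall a 1 :=
    hψa (Metric.closedBall_mem_nhds a one_pos)
  have hphi : ∀ᶠ j in atTop, phi g h B ω (x (ψ j)) d₀ < -ε :=
    (((continuous_phi g h B (fun i => (hg i).of_le one_le_two) hh hBcont ω d₀).tendsto a).comp
      hψa).eventually_lt_const hεa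
  have hsmall : ∀ᶠ j in atTop, lam (ψ j) * -theta g h B (x (ψ j)) (dω (x (ψ j))) < δ := by
    have := (hlim.comp hψ.tendsto_atTop).neg
    simp only [neg_zero] at this
    simpa using this.eventually_lt_const hδ
  obtain ⟨j, hj_near, hj_phi, hj_small⟩ := (hnear.and (hphi.and hsmall)).exists
  have hθε : theta g h B (x (ψ j)) (dω (x (ψ j))) ≤ -ε := by
    have := hmin (x (ψ j)) d₀
    simp only [phi] at this hj_phi
    nlinarith [sq_nonneg ‖dω (x (ψ j))‖]
  exact hj_small.not_ge (le_lam_mul_neg_theta hh (hB · _) (hL · _ hj_near) hL0 hω.le hε.le hτ.le hζ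
    (theta_le_of_phi_le_phi_zero g h B (hmin _ 0)) hθε (hlam_form _) (hlam_max _))

end ProximalNewton

theorem algorithm_one_accumulation_stationary_general
    {n m : ℕ} (g h : Fin m → Euc n → ℝ)
    (B : Fin m → Euc n → (Euc n →L[ℝ] Euc n))
    (hm : 0 < m)
    (hg : ∀ i, ContDiff ℝ 2 (g i))
    (hh : ∀ i, ConvexOn ℝ Set.univ (h i))
    (hBpos : ∀ i x (d : Euc n), d ≠ 0 → 0 < ⟪d, B i x d⟫)
    (hBcont : ∀ i, Continuous (fun x => B i x))
    (ω τ ζ : ℝ) (hω : 0 < ω)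
    (hτ : τ ∈ Set.Ioo (0 : ℝ) 1) (hζ : ζ ∈ Set.Ioo (0 : ℝ) 1)
    (dω : Euc n → Euc n)
    (hmin : ∀ y d, phi g h B ω y (dω y) ≤ phi g h B ω y d)
    (x : ℕ → Euc n) (lam : ℕ → ℝ)
    (hstep : ∀ k, x (k + 1) = x k + lam k • dω (x k))
    (hlam_form : ∀ k, ∃ j : ℕ, lam k = ζ ^ j)
    (harm : ∀ k i,
      g i (x k + lam k • dω (x k)) + h i (x k + lam k • dω (x k))
        ≤ g i (x k) + h i (x k) + lam k * τ * theta g h B (x k) (dω (x k)))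
    (hlam_max : ∀ k (j : ℕ), lam k < ζ ^ j →
      ∃ i, g i (x k) + h i (x k) + ζ ^ j * τ * theta g h B (x k) (dω (x k))
        < g i (x k + ζ ^ j • dω (x k)) + h i (x k + ζ ^ j • dω (x k)))
    (hbdd : ∀ i, ∃ C : ℝ, ∀ k, C ≤ g i (x k) + h i (x k)) :
    ∀ a : Euc n, MapClusterPt a atTop x →
      ParetoStationary (fun i y => g i y + h i y) a := by
  intro a ha
  have : Nonempty (Fin m) := Fin.pos_iff_nonempty.mp hm
  have hB : ∀ i x (v : Euc n), 0 ≤ ⟪v, B i x v⟫ := fun i x v => by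
    rcases eq_or_ne v 0 with rfl | hv
    · simp
    · exact (hBpos i x v hv).le
  have hlam : ∀ k, 0 ≤ lam k := fun k => by
    obtain ⟨j, hj⟩ := hlam_form k
    exact hj ▸ pow_nonneg hζ.1.le j
  have hdesc : ∀ k, theta g h B (x k) (dω (x k)) ≤ 0 := fun k =>
    (theta_le_of_phi_le_phi_zero g h B (hmin _ 0)).trans (neg_nonpos.2 (by positivity))
  have hlim := tendsto_lam_mul_theta ⟨0, hm⟩ hτ.1 hlam hdesc hstep (harm · _) (hbdd _)
  exact paretoStationary_of_phi_nonneg (fun i => (hg i).differentiable two_ne_zero) hh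
    (phi_nonneg_of_mapClusterPt hg hh hB hBcont hω hτ.2 hζ hmin hlam_form hlam_max hlim ha)

/-- every accumulation point of the sequence generated by the
proximal quasi-Newton method with Armijo line searches is Pareto stationary. -/
theorem algorithm_one_accumulation_stationary
    {n m : ℕ} (g h : Fin m → Euc n → ℝ)
    (B : Fin m → Euc n → (Euc n →L[ℝ] Euc n))
    (hm : 0 < m)
    (hg : ∀ i, ContDiff ℝ 2 (g i))
    (hsc : ∀ i, ∃ a : ℝ, 0 < a ∧ ∀ x y : Euc n,
      a * ‖x - y‖ ^ 2 ≤ ⟪gradient (g i) x - gradient (g i) y, x - y⟫)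
    (hh : ∀ i, ConvexOn ℝ Set.univ (h i))
    (hBsymm : ∀ i x (u v : Euc n), ⟪B i x u, v⟫ = ⟪u, B i x v⟫)
    (hBpos : ∀ i x (d : Euc n), d ≠ 0 → 0 < ⟪d, B i x d⟫)
    (hBcont : ∀ i, Continuous (fun x => B i x))
    (ω τ ζ : ℝ) (hω : 0 < ω)
    (hτ : τ ∈ Set.Ioo (0 : ℝ) 1) (hζ : ζ ∈ Set.Ioo (0 : ℝ) 1)
    (dω : Euc n → Euc n)
    (hmin : ∀ y d, phi g h B ω y (dω y) ≤ phi g h B ω y d)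
    (huniq : ∀ y d, (∀ d', phi g h B ω y d ≤ phi g h B ω y d') → d = dω y)
    (x : ℕ → Euc n) (lam : ℕ → ℝ)
    (hd : ∀ k, dω (x k) ≠ 0)
    (hstep : ∀ k, x (k + 1) = x k + lam k • dω (x k))
    (hlam_form : ∀ k, ∃ j : ℕ, lam k = ζ ^ j)
    (harm : ∀ k i,
      g i (x k + lam k • dω (x k)) + h i (x k + lam k • dω (x k))
        ≤ g i (x k) + h i (x k) + lam k * τ * theta g h B (x k) (dω (x k)))
    (hlam_max : ∀ k (j : ℕ), lam k < ζ ^ j →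
      ∃ i, g i (x k) + h i (x k) + ζ ^ j * τ * theta g h B (x k) (dω (x k))
        < g i (x k + ζ ^ j • dω (x k)) + h i (x k + ζ ^ j • dω (x k)))
    (hbdd : ∀ i, ∃ C : ℝ, ∀ k, C ≤ g i (x k) + h i (x k)) :
    ∀ a : Euc n, MapClusterPt a atTop x →
      ParetoStationary (fun i y => g i y + h i y) a :=
  algorithm_one_accumulation_stationary_general g h B hm hg hh hBpos hBcont ω τ ζ hω hτ hζ dω hmin x
    lam hstep hlam_form harm hlam_max hbdd
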